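/- arXiv:1307.3617 — 2 statements merged into one kernel-verified Lean document; each statement's English description precedes it below -/
import Mathlib

section
/- Let X₁,…,Xₙ be ±1-valued random variables such that E[X_i X_j] ≤ (10Δ)^{-d(i,j)} for all i ≠ j and E[X_i X_j] ≥ 0, where d is the graph distance on a graph G of maximum degree Δ. Then for any weights w ∈ ℝⁿ, letting W = Σᵢ wᵢ² and f(X) = Σᵢ wᵢ Xᵢ, we have (4/5)W ≤ E[f(X)²] ≤ (6/5)W. -/
open Finset MeasureTheory ProbabilityTheory

lemma stmt11_step {n : ℕ} (G : SimpleGraph (Fin n)) (hconn : G.Connected)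
    (i j : Fin n) (d : ℕ) (h : G.dist i j = d + 1) :
    ∃ k, G.Adj k j ∧ G.dist i k = d := by
  obtain ⟨p, hp⟩ := hconn.exists_walk_length_eq_dist i j
  have hlen : p.reverse.length = d + 1 := by
    rw [SimpleGraph.Walk.length_reverse, hp, h]
  set q := p.reverse with hq
  clear_value q
  cases q with
  | nil => simp at hlen
  | @cons _ k _ hadj q' =>
    simp [SimpleGraph.Walk.length_cons] at hlen
    refine ⟨k, hadj.symm, ?_⟩
    have h1 : G.dist i k ≤ d := by
      have := SimpleGraph.dist_le q'.reverse
      simpa [hlen] using this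
    have h2 : G.dist i j ≤ G.dist i k + G.dist k j := hconn.dist_triangle
    have h3 : G.dist k j ≤ 1 := by
      have := SimpleGraph.dist_le hadj.symm.toWalk
      simpa using this
    omega

lemma stmt11_card_sphere {n Δ : ℕ} (G : SimpleGraph (Fin n)) [DecidableRel G.Adj]
    (hconn : G.Connected) (hdeg : ∀ v, G.degree v ≤ Δ) (i : Fin n) (d : ℕ) :
    (univ.filter (fun j => G.dist i j = d)).card ≤ Δ ^ d := by
  induction d with
  | zero =>
    have hsub : univ.filter (fun j => G.dist i j = 0) ⊆ {i} := by
      intro j hj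
      simp only [mem_filter, mem_univ, true_and] at hj
      simp [(hconn.dist_eq_zero_iff.mp hj).symm]
    simpa using Finset.card_le_card hsub
  | succ d ih =>
    have hsub : univ.filter (fun j => G.dist i j = d + 1) ⊆
        (univ.filter (fun j => G.dist i j = d)).biUnion (fun k => G.neighborFinset k) := by
      intro j hj
      simp only [mem_filter, mem_univ, true_and] at hj
      obtain ⟨k, hk, hkd⟩ := stmt11_step G hconn i j d hj
      exact Finset.mem_biUnion.mpr ⟨k, by simp [hkd], by simpa using hk⟩
    calc (univ.filter (fun j => G.dist i j = d + 1)).card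
        ≤ ((univ.filter (fun j => G.dist i j = d)).biUnion
            (fun k => G.neighborFinset k)).card := Finset.card_le_card hsub
      _ ≤ ∑ k ∈ univ.filter (fun j => G.dist i j = d), (G.neighborFinset k).card :=
          Finset.card_biUnion_le
      _ ≤ ∑ k ∈ univ.filter (fun j => G.dist i j = d), Δ := by
          refine Finset.sum_le_sum fun k _ => ?_
          simpa [SimpleGraph.card_neighborFinset_eq_degree] using hdeg k
      _ = (univ.filter (fun j => G.dist i j = d)).card * Δ := by simp [mul_comm]
      _ ≤ Δ ^ d * Δ := Nat.mul_le_mul_right _ ih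
      _ = Δ ^ (d + 1) := by ring

lemma stmt11_sum_dist {n Δ : ℕ} (hΔ : 1 ≤ Δ) (G : SimpleGraph (Fin n)) [DecidableRel G.Adj]
    (hconn : G.Connected) (hdeg : ∀ v, G.degree v ≤ Δ) (i : Fin n) :
    ∑ j ∈ univ.erase i, (1 / (10 * Δ : ℝ)) ^ (G.dist i j) ≤ 1 / 5 := by
  set r : ℝ := 1 / (10 * Δ : ℝ) with hr
  have hΔ0 : (0:ℝ) < Δ := by exact_mod_cast hΔ
  have hr0 : 0 ≤ r := by positivity
  have hmaps : ∀ j ∈ univ.erase i, G.dist i j ∈ Finset.Icc 1 n := by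
    intro j hj
    have hne : j ≠ i := Finset.ne_of_mem_erase hj
    have h1 : 1 ≤ G.dist i j := hconn.pos_dist_of_ne hne.symm
    have h2 : G.dist i j ≤ n := by
      obtain ⟨p, hp⟩ := hconn.exists_walk_length_eq_dist i j
      have hlt := p.toPath.2.length_lt
      have h3 : G.dist i j ≤ (p.toPath : G.Walk i j).length := SimpleGraph.dist_le _
      simp [Fintype.card_fin] at hlt
      omega
    simp [h1, h2]
  rw [← Finset.sum_fiberwise_of_maps_to hmaps]
  have hstep : ∀ d ∈ Finset.Icc 1 n,
      ∑ j ∈ (univ.erase i).filter (fun j => G.dist i j = d), r ^ (G.dist i j)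
        ≤ (1/10 : ℝ) ^ d := by
    intro d _
    have heq : ∑ j ∈ (univ.erase i).filter (fun j => G.dist i j = d), r ^ (G.dist i j)
        = ((univ.erase i).filter (fun j => G.dist i j = d)).card * r ^ d := by
      rw [Finset.sum_congr rfl (fun j hj => by
        simp only [mem_filter] at hj; rw [hj.2]), Finset.sum_const, nsmul_eq_mul]
    rw [heq]
    have hcard : ((univ.erase i).filter (fun j => G.dist i j = d)).card ≤ Δ ^ d := by
      refine le_trans (Finset.card_le_card ?_) (stmt11_card_sphere G hconn hdeg i d)
      intro j hj
      simp only [mem_filter, mem_erase] at hj ⊢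
      exact ⟨mem_univ j, hj.2⟩
    calc (((univ.erase i).filter (fun j => G.dist i j = d)).card : ℝ) * r ^ d
        ≤ (Δ:ℝ) ^ d * r ^ d := by
          apply mul_le_mul_of_nonneg_right _ (by positivity)
          exact_mod_cast hcard
      _ = ((Δ:ℝ) * r) ^ d := (mul_pow _ _ _).symm
      _ = (1/10 : ℝ) ^ d := by
          congr 1
          rw [hr]; field_simp
  calc ∑ d ∈ Finset.Icc 1 n, ∑ j ∈ (univ.erase i).filter (fun j => G.dist i j = d),
          r ^ (G.dist i j)
      ≤ ∑ d ∈ Finset.Icc 1 n, (1/10 : ℝ) ^ d := Finset.sum_le_sum hstep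
    _ ≤ 1 / 5 := by
        rw [← Finset.Ico_add_one_right_eq_Icc, Finset.sum_Ico_eq_sum_range]
        have h1 : ∀ k ∈ Finset.range (n + 1 - 1), (1/10:ℝ) ^ (1 + k) = (1/10) * (1/10)^k := by
          intro k _; rw [pow_add, pow_one]
        rw [Finset.sum_congr rfl h1, ← Finset.mul_sum]
        have hgeom : ∑ k ∈ Finset.range (n + 1 - 1), (1/10:ℝ)^k ≤ 10/9 := by
          rw [geom_sum_eq (by norm_num : (1/10:ℝ) ≠ 1)]
          rw [div_le_iff_of_neg (by norm_num : (1/10:ℝ) - 1 < 0)]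
          have : (0:ℝ) ≤ (1/10:ℝ)^(n+1-1) := by positivity
          nlinarith
        nlinarith [hgeom]


/-- second-moment bounds `(4/5)W ≤ E[(Σᵢ wᵢXᵢ)²] ≤ (6/5)W`
(`W = Σᵢ wᵢ²`) for `±1`-valued random variables whose pairwise correlations
decay as `(10Δ)^{-d(i,j)}` in the graph distance of a connected graph of
maximum degree `Δ`. -/
theorem stmt11 {Ω : Type*} [MeasureSpace Ω] [IsProbabilityMeasure (ℙ : Measure Ω)]
    {n Δ : ℕ} (hΔ : 1 ≤ Δ) (G : SimpleGraph (Fin n)) [DecidableRel G.Adj]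
    (hconn : G.Connected) (hdeg : ∀ v, G.degree v ≤ Δ)
    (X : Fin n → Ω → ℝ) (hXmeas : ∀ i, Measurable (X i))
    (hXpm : ∀ i ω, X i ω = 1 ∨ X i ω = -1)
    (hcorr : ∀ i j, i ≠ j →
      0 ≤ (∫ ω, X i ω * X j ω) ∧
      (∫ ω, X i ω * X j ω) ≤ (1 / (10 * Δ : ℝ)) ^ (G.dist i j))
    (w : Fin n → ℝ) :
    (4 / 5) * (∑ i, (w i) ^ 2) ≤ (∫ ω, (∑ i, w i * X i ω) ^ 2) ∧
    (∫ ω, (∑ i, w i * X i ω) ^ 2) ≤ (6 / 5) * (∑ i, (w i) ^ 2) := by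
  classical
  set r : ℝ := 1 / (10 * Δ : ℝ) with hrdef
  set W : ℝ := ∑ i, (w i)^2 with hW
  have hr0 : 0 ≤ r := by positivity
  -- integrability
  have hXint : ∀ i j, Integrable (fun ω => X i ω * X j ω) ℙ := by
    intro i j
    refine ⟨((hXmeas i).mul (hXmeas j)).aestronglyMeasurable, ?_⟩
    refine HasFiniteIntegral.of_bounded (C := 1) ?_
    filter_upwards with ω
    rcases hXpm i ω with h1 | h1 <;> rcases hXpm j ω with h2 | h2 <;>
      simp [h1, h2]
  have hint2 : ∀ i j : Fin n, Integrable (fun ω => w i * w j * (X i ω * X j ω)) ℙ :=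
    fun i j => (hXint i j).const_mul _
  have hint1 : ∀ i : Fin n, Integrable (fun ω => ∑ j, w i * w j * (X i ω * X j ω)) ℙ :=
    fun i => integrable_finset_sum _ (fun j _ => hint2 i j)
  have hexp : ∀ ω, (∑ i, w i * X i ω)^2 = ∑ i, ∑ j, w i * w j * (X i ω * X j ω) := by
    intro ω
    rw [sq, Finset.sum_mul_sum]
    exact Finset.sum_congr rfl fun i _ => Finset.sum_congr rfl fun j _ => by ring
  have key : (∫ ω, (∑ i, w i * X i ω)^2) = ∑ i, ∑ j, w i * w j * (∫ ω, X i ω * X j ω) := by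
    simp_rw [hexp]
    rw [integral_finset_sum _ (fun i _ => hint1 i)]
    refine Finset.sum_congr rfl fun i _ => ?_
    rw [integral_finset_sum _ (fun j _ => hint2 i j)]
    exact Finset.sum_congr rfl fun j _ => integral_const_mul _ _
  have hdiag : ∀ i, (∫ ω, X i ω * X i ω) = 1 := by
    intro i
    have h1 : (fun ω => X i ω * X i ω) = fun _ => (1:ℝ) := funext fun ω => by
      rcases hXpm i ω with h | h <;> rw [h] <;> norm_num
    rw [h1, integral_const]; simp
  set R : ℝ := ∑ i, ∑ j ∈ univ.erase i, w i * w j * (∫ ω, X i ω * X j ω) with hR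
  have split : (∫ ω, (∑ i, w i * X i ω)^2) = W + R := by
    rw [key, hR, hW, ← Finset.sum_add_distrib]
    refine Finset.sum_congr rfl fun i _ => ?_
    have h2 : w i * w i * (∫ ω, X i ω * X i ω) = (w i)^2 := by rw [hdiag]; ring
    rw [← Finset.add_sum_erase _ _ (mem_univ i), h2]
  -- termwise bound
  have habs : ∀ i : Fin n, ∀ j ∈ univ.erase i,
      |w i * w j * (∫ ω, X i ω * X j ω)| ≤ ((w i)^2 + (w j)^2)/2 * r ^ (G.dist i j) := by
    intro i j hj
    have hne : i ≠ j := (Finset.ne_of_mem_erase hj).symm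
    obtain ⟨hE0, hE1⟩ := hcorr i j hne
    have h2 : |w i * w j| ≤ ((w i)^2 + (w j)^2)/2 := by
      rw [abs_mul]
      nlinarith [sq_abs (w i), sq_abs (w j), sq_nonneg (|w i| - |w j|)]
    rw [abs_mul, abs_of_nonneg hE0]
    exact mul_le_mul h2 hE1 hE0 (by positivity)
  have hA : ∑ i, (w i)^2 * (∑ j ∈ univ.erase i, r ^ (G.dist i j)) ≤ (1/5) * W := by
    rw [hW, Finset.mul_sum]
    refine Finset.sum_le_sum fun i _ => ?_
    rw [mul_comm (1/5 : ℝ)]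
    exact mul_le_mul_of_nonneg_left (stmt11_sum_dist hΔ G hconn hdeg i) (sq_nonneg _)
  have hRabs : |R| ≤ (1/5) * W := by
    have step1 : |R| ≤ ∑ i, ∑ j ∈ univ.erase i, ((w i)^2 + (w j)^2)/2 * r ^ (G.dist i j) := by
      refine le_trans (Finset.abs_sum_le_sum_abs _ _) (Finset.sum_le_sum fun i _ => ?_)
      exact le_trans (Finset.abs_sum_le_sum_abs _ _) (Finset.sum_le_sum (habs i))
    have step2 : ∑ i, ∑ j ∈ univ.erase i, ((w i)^2 + (w j)^2)/2 * r ^ (G.dist i j)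
        = (1/2) * ((∑ i, ∑ j ∈ univ.erase i, (w i)^2 * r ^ (G.dist i j))
          + (∑ i, ∑ j ∈ univ.erase i, (w j)^2 * r ^ (G.dist i j))) := by
      rw [← Finset.sum_add_distrib, Finset.mul_sum]
      refine Finset.sum_congr rfl fun i _ => ?_
      rw [← Finset.sum_add_distrib, Finset.mul_sum]
      exact Finset.sum_congr rfl fun j _ => by ring
    have hB1 : ∑ i, ∑ j ∈ univ.erase i, (w i)^2 * r ^ (G.dist i j) ≤ (1/5) * W := by
      refine le_trans (le_of_eq ?_) hA
      exact Finset.sum_congr rfl fun i _ => (Finset.mul_sum _ _ _).symm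
    have hB2 : ∑ i, ∑ j ∈ univ.erase i, (w j)^2 * r ^ (G.dist i j) ≤ (1/5) * W := by
      have hswap : ∑ i, ∑ j ∈ univ.erase i, (w j)^2 * r ^ (G.dist i j)
          = ∑ j, ∑ i ∈ univ.erase j, (w j)^2 * r ^ (G.dist i j) := by
        refine Finset.sum_comm' ?_
        intro x y
        simp only [mem_univ, mem_erase, true_and, and_true]
        exact ⟨fun h => h.symm, fun h => h.symm⟩
      rw [hswap]
      have heq2 : ∀ j : Fin n, ∑ i ∈ univ.erase j, (w j)^2 * r ^ (G.dist i j)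
          = (w j)^2 * (∑ i ∈ univ.erase j, r ^ (G.dist j i)) := by
        intro j
        rw [Finset.mul_sum]
        exact Finset.sum_congr rfl fun i _ => by rw [SimpleGraph.dist_comm]
      rw [Finset.sum_congr rfl fun j _ => heq2 j]
      exact hA
    calc |R| ≤ _ := step1
      _ = _ := step2
      _ ≤ (1/2) * ((1/5) * W + (1/5) * W) := by
          refine mul_le_mul_of_nonneg_left (add_le_add hB1 hB2) (by norm_num)
      _ = (1/5) * W := by ring
  obtain ⟨hlo, hhi⟩ := abs_le.mp hRabs
  rw [split] at *
  constructor <;> [linarith; linarith]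
end

section
/- Let G = ([n],E) have maximum degree Δ and let q ≥ 3Δ. For the uniform distribution π over proper q-colorings of G, for any S ⊆ [n] and proper partial colorings C¹, C² of S (each extendable to proper colorings), π(x_S = C¹)/π(x_S = C²) ≤ q^{(Δ+1)|S|}. -/
/-!
Fix a proper colouring extending `C²`. Any proper colouring extending `C¹` can be turned into
one extending `C²` by copying that colouring onto `S` and then greedily recolouring the vertices
of `N(S) \ S`; since `q ≥ 3Δ`, such a vertex, having degree between `1` and `Δ`, always has a free
colour. The new colouring differs from the old one only on `S ∪ N(S)`, a set of at most
`(Δ + 1)|S|` vertices, so the old colouring is determined by the new one together with its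
restriction to `S ∪ N(S)`, and at most `q ^ ((Δ + 1)|S|)` colourings share the same image.
-/

open Finset

namespace SimpleGraph

variable {V α : Type*} (G : SimpleGraph V)

def IsProperColoring (C : V → α) : Prop := ∀ i j, G.Adj i j → C i ≠ C j

section ClosedNbhd

variable [DecidableEq V] [Fintype V] [DecidableRel G.Adj]

def closedNbhd (S : Finset V) : Finset V := S ∪ S.biUnion fun s => G.neighborFinset s

variable {G}

theorem subset_closedNbhd (S : Finset V) : S ⊆ G.closedNbhd S := subset_union_left

theorem mem_closedNbhd_of_adj {S : Finset V} {i j : V} (hi : i ∈ S) (hij : G.Adj i j) :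
    j ∈ G.closedNbhd S :=
  mem_union_right _ (mem_biUnion.mpr ⟨i, hi, (G.mem_neighborFinset i j).mpr hij⟩)

@[simp]
theorem closedNbhd_empty : G.closedNbhd ∅ = ∅ := by simp [closedNbhd]

theorem degree_pos_of_mem_closedNbhd_sdiff {S : Finset V} {v : V}
    (hv : v ∈ G.closedNbhd S \ S) : 0 < G.degree v := by
  obtain ⟨hvN, hvS⟩ := mem_sdiff.mp hv
  obtain hvS' | hvN := mem_union.mp hvN
  · exact absurd hvS' hvS
  obtain ⟨s, -, hsv⟩ := mem_biUnion.mp hvN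
  rw [← card_neighborFinset_eq_degree, card_pos]
  exact ⟨s, (G.mem_neighborFinset v s).mpr ((G.mem_neighborFinset s v).mp hsv).symm⟩

theorem card_closedNbhd_le {Δ : ℕ} (hdeg : ∀ v, G.degree v ≤ Δ) (S : Finset V) :
    #(G.closedNbhd S) ≤ (Δ + 1) * #S :=
  calc #(G.closedNbhd S) ≤ #S + #(S.biUnion fun s => G.neighborFinset s) := card_union_le _ _
    _ ≤ #S + ∑ s ∈ S, #(G.neighborFinset s) := by gcongr; exact card_biUnion_le
    _ ≤ #S + ∑ _s ∈ S, Δ := by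
        gcongr with s
        rw [card_neighborFinset_eq_degree]
        exact hdeg s
    _ = (Δ + 1) * #S := by rw [sum_const, smul_eq_mul]; ring

end ClosedNbhd

variable [Fintype V] [DecidableRel G.Adj] [Fintype α]

theorem exists_notMem_image_neighborFinset [DecidableEq α] (C : V → α) {v : V}
    (hv : G.degree v < Fintype.card α) : ∃ c, c ∉ (G.neighborFinset v).image C := by
  obtain ⟨c, -, hc⟩ := exists_mem_notMem_of_card_lt_card (s := (G.neighborFinset v).image C)
    (t := univ) ((card_image_le.trans_eq (G.card_neighborFinset_eq_degree v)).trans_lt hv)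
  exact ⟨c, hc⟩

theorem exists_isProperColoring_eqOn_compl [DecidableEq V] (R : Finset V)
    (hR : ∀ v ∈ R, G.degree v < Fintype.card α) (C : V → α)
    (hC : ∀ i j, G.Adj i j → i ∉ R → j ∉ R → C i ≠ C j) :
    ∃ C', G.IsProperColoring C' ∧ ∀ i ∉ R, C' i = C i := by
  classical
  induction R using Finset.induction_on generalizing C with
  | empty => exact ⟨C, fun i j hij => hC i j hij (notMem_empty i) (notMem_empty j), fun _ _ => rfl⟩
  | insert v R _ ih =>
    obtain ⟨c, hc⟩ := G.exists_notMem_image_neighborFinset C (hR v (mem_insert_self v R))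
    -- `c` avoids the current colours of all neighbours of `v`; the neighbours in `R` are
    -- recoloured later, and then they avoid `c` in turn.
    have hc' : ∀ j, G.Adj v j → c ≠ C j := fun j hvj hcj =>
      hc (mem_image.mpr ⟨j, (G.mem_neighborFinset v j).mpr hvj, hcj.symm⟩)
    obtain ⟨C', hC', hC'R⟩ := ih (fun w hw => hR w (mem_insert_of_mem hw))
      (Function.update C v c) (by
        intro i j hij hi hj
        rcases eq_or_ne i v with rfl | hiv
        · rw [Function.update_self, Function.update_of_ne (G.ne_of_adj hij).symm]
          exact hc' j hij
        rcases eq_or_ne j v with rfl | hjv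
        · rw [Function.update_self, Function.update_of_ne hiv]
          exact (hc' i hij.symm).symm
        rw [Function.update_of_ne hiv, Function.update_of_ne hjv]
        exact hC i j hij (by simp [hiv, hi]) (by simp [hjv, hj]))
    refine ⟨C', hC', fun i hi => ?_⟩
    rw [hC'R i (fun h => hi (mem_insert_of_mem h)),
      Function.update_of_ne (by rintro rfl; exact hi (mem_insert_self _ R))]

theorem exists_isProperColoring_eqOn_and_eqOn_compl_closedNbhd [DecidableEq V] (S : Finset V)
    (hdeg : ∀ v ∈ G.closedNbhd S \ S, G.degree v < Fintype.card α) {C D : V → α}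
    (hC : G.IsProperColoring C) (hD : G.IsProperColoring D) :
    ∃ C', G.IsProperColoring C' ∧ (∀ i ∈ S, C' i = D i) ∧
      ∀ i ∉ G.closedNbhd S, C' i = C i := by
  let C₀ : V → α := fun i => if i ∈ S then D i else C i
  have hC₀ : ∀ i j, G.Adj i j → i ∉ G.closedNbhd S \ S → j ∉ G.closedNbhd S \ S →
      C₀ i ≠ C₀ j := by
    intro i j hij hi hj
    by_cases hiS : i ∈ S <;> by_cases hjS : j ∈ S <;> simp only [C₀, hiS, hjS, if_true, if_false]
    · exact hD i j hij
    · exact absurd (mem_sdiff.mpr ⟨mem_closedNbhd_of_adj hiS hij, hjS⟩) hj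
    · exact absurd (mem_sdiff.mpr ⟨mem_closedNbhd_of_adj hjS hij.symm, hiS⟩) hi
    · exact hC i j hij
  obtain ⟨C', hC', hC'R⟩ := G.exists_isProperColoring_eqOn_compl _ hdeg C₀ hC₀
  refine ⟨C', hC', fun i hi => ?_, fun i hi => ?_⟩
  · rw [hC'R i (fun h => (mem_sdiff.mp h).2 hi)]
    simp [C₀, hi]
  · rw [hC'R i (fun h => hi (mem_sdiff.mp h).1)]
    have hiS : i ∉ S := fun h => hi (subset_closedNbhd S h)
    simp [C₀, hiS]

end SimpleGraph

open SimpleGraph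

/-- A function of `s` is recovered from its modification in `t` and its values on `T`. -/
theorem Finset.card_le_card_mul_pow_of_forall_exists_eqOn_compl {V α : Type*} [DecidableEq V]
    [Fintype α] {s t : Finset (V → α)} (T : Finset V)
    (h : ∀ C ∈ s, ∃ C' ∈ t, ∀ i ∉ T, C' i = C i) :
    #s ≤ #t * Fintype.card α ^ #T := by
  choose! f hft hfT using h
  calc #s ≤ #(t ×ˢ (univ : Finset (T → α))) := by
        refine card_le_card_of_injOn (fun C => (f C, fun i : T => C i))
          (fun C hC => mem_product.mpr ⟨hft C hC, mem_univ _⟩) ?_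
        intro C hC C' hC' heq
        simp only [Prod.mk.injEq, funext_iff, Subtype.forall] at heq
        funext i
        by_cases hi : i ∈ T
        · exact heq.2 i hi
        · rw [← hfT C hC i hi, heq.1 i, hfT C' hC' i hi]
    _ = #t * Fintype.card α ^ #T := by simp

theorem stmt17_general {n Δ q : ℕ} (G : SimpleGraph (Fin n)) [DecidableRel G.Adj]
    (hdeg : ∀ v, G.degree v ≤ Δ) (hq : 3 * Δ ≤ q)
    (S : Finset (Fin n)) (C1 C2 : Fin n → Fin q) :
    ((Finset.univ.filter (fun C : Fin n → Fin q =>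
        (∀ i j, G.Adj i j → C i ≠ C j) ∧ ∀ i ∈ S, C i = C1 i)).card : ℝ)
      / ((Finset.univ.filter (fun C : Fin n → Fin q =>
        (∀ i j, G.Adj i j → C i ≠ C j) ∧ ∀ i ∈ S, C i = C2 i)).card : ℝ)
      ≤ (q : ℝ) ^ ((Δ + 1) * S.card) := by
  set A₂ := univ.filter fun C : Fin n → Fin q =>
    (∀ i j, G.Adj i j → C i ≠ C j) ∧ ∀ i ∈ S, C i = C2 i
  obtain hA₂ | ⟨D, hD⟩ := A₂.eq_empty_or_nonempty
  · rw [hA₂, card_empty, Nat.cast_zero, div_zero]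
    positivity
  obtain ⟨-, hDp, hDS⟩ := mem_filter.mp hD
  have hfree : ∀ v ∈ G.closedNbhd S \ S, G.degree v < Fintype.card (Fin q) := fun v hv => by
    have := degree_pos_of_mem_closedNbhd_sdiff hv
    have := hdeg v
    rw [Fintype.card_fin]
    omega
  have hcount := card_le_card_mul_pow_of_forall_exists_eqOn_compl (s := univ.filter fun C =>
      (∀ i j, G.Adj i j → C i ≠ C j) ∧ ∀ i ∈ S, C i = C1 i) (t := A₂) (G.closedNbhd S) fun C hC => by
    obtain ⟨C', hC', hC'S, hC'T⟩ :=
      G.exists_isProperColoring_eqOn_and_eqOn_compl_closedNbhd S hfree (mem_filter.mp hC).2.1 hDp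
    exact ⟨C', mem_filter.mpr ⟨mem_univ _, hC', fun i hi => (hC'S i hi).trans (hDS i hi)⟩, hC'T⟩
  have hpow : q ^ #(G.closedNbhd S) ≤ q ^ ((Δ + 1) * #S) := by
    obtain rfl | ⟨i, -⟩ := S.eq_empty_or_nonempty
    · simp
    exact Nat.pow_le_pow_right (D i).pos (card_closedNbhd_le hdeg S)
  rw [Fintype.card_fin] at hcount
  rw [div_le_iff₀ (by exact_mod_cast card_pos.mpr ⟨D, hD⟩), mul_comm]
  exact_mod_cast hcount.trans (Nat.mul_le_mul_left _ hpow)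

/-- for the uniform distribution over proper `q`-colorings of a
graph of maximum degree `Δ` with `q ≥ 3Δ`, and any two extendable partial
colorings `C¹, C²` of a set `S`,
`π(x_S = C¹)/π(x_S = C²) ≤ q^{(Δ+1)|S|}`. -/
theorem stmt17 {n Δ q : ℕ} (G : SimpleGraph (Fin n)) [DecidableRel G.Adj]
    (hdeg : ∀ v, G.degree v ≤ Δ) (hq : 3 * Δ ≤ q)
    (S : Finset (Fin n)) (C1 C2 : Fin n → Fin q)
    (hC1 : ∃ D : Fin n → Fin q, (∀ i j, G.Adj i j → D i ≠ D j) ∧ ∀ i ∈ S, D i = C1 i)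
    (hC2 : ∃ D : Fin n → Fin q, (∀ i j, G.Adj i j → D i ≠ D j) ∧ ∀ i ∈ S, D i = C2 i) :
    ((Finset.univ.filter (fun C : Fin n → Fin q =>
        (∀ i j, G.Adj i j → C i ≠ C j) ∧ ∀ i ∈ S, C i = C1 i)).card : ℝ)
      / ((Finset.univ.filter (fun C : Fin n → Fin q =>
        (∀ i j, G.Adj i j → C i ≠ C j) ∧ ∀ i ∈ S, C i = C2 i)).card : ℝ)
      ≤ (q : ℝ) ^ ((Δ + 1) * S.card) :=
  stmt17_general G hdeg hq S C1 C2
end
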